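/- arXiv:2211.05327 — 3 statements merged into one kernel-verified Lean document; each statement's English description precedes it below -/
import Mathlib

section
/- Let ι be a type of storage locations and α : ι → Type assign to each location its value type, and let S = ∀ i, α i be the type of global states. Let f, g : S → S, and let R_f, W_f, R_g, W_g be sets of locations such that: (i) f writes only inside W_f, i.e., for every state s and every i ∉ W_f, f s i = s i; (ii) f reads only inside R_f, i.e., for all states s, t, if s and t agree on every location in R_f then f s and f t agree on every location in W_f (∀ i ∈ W_f, f s i = f t i); and (iii), (iv) the analogous conditions hold for g with R_g, W_g. If W_f ∩ (R_g ∪ W_g) = ∅ and W_g ∩ (R_f ∪ W_f) = ∅, then f ∘ g = g ∘ f. -/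
/-- Commutativity of non-conflicting transactions: if `f` writes only inside `Wf`
and reads only inside `Rf`, `g` writes only inside `Wg` and reads only inside `Rg`,
and `Wf ∩ (Rg ∪ Wg) = ∅` and `Wg ∩ (Rf ∪ Wf) = ∅`, then `f ∘ g = g ∘ f`. -/
theorem stmt_4 {ι : Type*} {α : ι → Type*}
    (f g : (∀ i, α i) → (∀ i, α i)) (Rf Wf Rg Wg : Set ι)
    (hfw : ∀ s : ∀ i, α i, ∀ i ∉ Wf, f s i = s i)
    (hfr : ∀ s t : ∀ i, α i, (∀ i ∈ Rf, s i = t i) → ∀ i ∈ Wf, f s i = f t i)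
    (hgw : ∀ s : ∀ i, α i, ∀ i ∉ Wg, g s i = s i)
    (hgr : ∀ s t : ∀ i, α i, (∀ i ∈ Rg, s i = t i) → ∀ i ∈ Wg, g s i = g t i)
    (h1 : Wf ∩ (Rg ∪ Wg) = ∅) (h2 : Wg ∩ (Rf ∪ Wf) = ∅) :
    f ∘ g = g ∘ f := by
  have d1 : ∀ i ∈ Wf, i ∉ Rg ∪ Wg := fun i hi hj =>
    Set.eq_empty_iff_forall_notMem.mp h1 i ⟨hi, hj⟩
  have d2 : ∀ i ∈ Wg, i ∉ Rf ∪ Wf := fun i hi hj =>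
    Set.eq_empty_iff_forall_notMem.mp h2 i ⟨hi, hj⟩
  funext s
  funext i
  by_cases hiWf : i ∈ Wf
  · have hiWg : i ∉ Wg := fun h => d1 i hiWf (Or.inr h)
    have hagree : ∀ j ∈ Rf, g s j = s j := fun j hj =>
      hgw s j (fun hw => d2 j hw (Or.inl hj))
    calc f (g s) i = f s i := hfr _ _ hagree i hiWf
      _ = g (f s) i := (hgw _ i hiWg).symm
  · by_cases hiWg : i ∈ Wg
    · have hagree : ∀ j ∈ Rg, f s j = s j := fun j hj =>
        hfw s j (fun hw => d1 j hw (Or.inl hj))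
      calc f (g s) i = g s i := hfw _ i hiWf
        _ = g (f s) i := (hgr _ _ hagree i hiWg).symm
    · calc f (g s) i = g s i := hfw _ i hiWf
        _ = s i := hgw _ i hiWg
        _ = f s i := (hfw _ i hiWf).symm
        _ = g (f s) i := (hgw _ i hiWg).symm
end

section
/- Let G be a group, q an element of G, and l a list of elements of G. Suppose each position of l is marked either 'kept' or 'deleted', and assume that every deleted element of l commutes with q and commutes with every kept element occurring at an earlier position of l. Let l' be the sublist of kept elements of l (in order). Writing w(m) for the product of a list m of group elements taken with the last element of m as the leftmost factor (i.e., w(m) = (reverse of m).prod), we have w(l) * q * w(l)⁻¹ = w(l') * q * w(l')⁻¹. -/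
/-! Replaying a list of queries after inserting `q` at the front amounts to conjugating `q` by
the queries one at a time, oldest first. A deleted query commutes with the current conjugate of
`q`, because it commutes with `q` and with every kept query before it, so it acts trivially and
can be dropped. -/

section

open List MulAut

variable {G : Type*} [Group G]

theorem MulAut.conj_reverse_prod_cons (a : G) (m : List G) (r : G) :
    conj (a :: m).reverse.prod r = conj m.reverse.prod (conj a r) := by
  simp

theorem MulAut.conj_reverse_prod_map_fst_eq_filter (q : G) (l : List (G × Bool))
    (hq : ∀ x ∈ l, x.2 = false → Commute x.1 q)
    (hl : l.Pairwise fun x y => x.2 = true → y.2 = false → Commute y.1 x.1) :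
    conj (l.map Prod.fst).reverse.prod q = conj ((l.filter (·.2)).map Prod.fst).reverse.prod q := by
  induction l generalizing q with
  | nil => rfl
  | cons a t ih =>
    rw [pairwise_cons] at hl
    have hq_tail : ∀ x ∈ t, x.2 = false → Commute x.1 q := fun x hx => hq x (mem_cons_of_mem a hx)
    obtain ⟨g, _ | _⟩ := a
    · have hgq : conj g q = q := (hq _ mem_cons_self rfl).mul_inv_cancel
      rw [filter_cons_of_neg (by simp), map_cons, conj_reverse_prod_cons, hgq]
      exact ih q hq_tail hl.2
    · rw [filter_cons_of_pos rfl, map_cons, map_cons, conj_reverse_prod_cons,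
        conj_reverse_prod_cons]
      refine ih (conj g q) (fun x hx hx_del => ?_) hl.2
      have hxg : Commute x.1 g := hl.1 x hx rfl hx_del
      exact (hxg.mul_right (hq_tail x hx hx_del)).mul_right hxg.inv_right

end

/-- Let `l` be a list of queries (group elements), each marked kept (`true`) or
deleted (`false`). If every deleted element commutes with `q` and with every kept
element at an earlier position, then conjugating `q` by the product of `l` (last
element leftmost) equals conjugating `q` by the product of the kept sublist. -/
theorem stmt_6 {G : Type*} [Group G] (q : G) (l : List (G × Bool))
    (hcomm : ∀ j : Fin l.length, (l.get j).2 = false →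
      Commute (l.get j).1 q ∧
      ∀ i : Fin l.length, (i : ℕ) < (j : ℕ) → (l.get i).2 = true →
        Commute (l.get j).1 (l.get i).1) :
    (l.map Prod.fst).reverse.prod * q * ((l.map Prod.fst).reverse.prod)⁻¹ =
      ((l.filter (fun x => x.2)).map Prod.fst).reverse.prod * q *
        (((l.filter (fun x => x.2)).map Prod.fst).reverse.prod)⁻¹ := by
  have hq : ∀ x ∈ l, x.2 = false → Commute x.1 q := by
    intro x hx hx_del
    obtain ⟨j, rfl⟩ := List.mem_iff_get.mp hx
    exact (hcomm j hx_del).1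
  have hl : l.Pairwise fun x y => x.2 = true → y.2 = false → Commute y.1 x.1 :=
    List.pairwise_iff_get.mpr fun i j hij hi_kept hj_del => (hcomm j hj_del).2 i hij hi_kept
  simpa only [MulAut.conj_apply] using MulAut.conj_reverse_prod_map_fst_eq_filter q l hq hl
end

section
/- Let G be a group, q an element of G, and l a list of elements of G. Suppose each position of l is marked with one of two tags, K or ∅, and assume that every ∅-tagged element of l commutes with q and commutes with every K-tagged element of l. Let l_K be the sublist of K-tagged elements of l (in order). Writing w(m) for the product of a list m of group elements taken with the last element of m as the leftmost factor (i.e., w(m) = (reverse of m).prod), we have w(l) * q * w(l)⁻¹ = w(l_K) * q * w(l_K)⁻¹. -/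
/-!
If the untagged factors commute with the tagged ones, the product of the whole list splits as
(product of the tagged sublist) * (product of the untagged sublist). The untagged part also
commutes with `q`, so it drops out of the conjugation.
-/

namespace List

theorem prod_map_eq_prod_map_filter_mul_prod_map_filter_not {α M : Type*} [Monoid M]
    (f : α → M) (p : α → Bool) (l : List α)
    (h : ∀ x ∈ l, p x = false → ∀ y ∈ l, p y = true → Commute (f x) (f y)) :
    (l.map f).prod = ((l.filter p).map f).prod * ((l.filter (fun x => !p x)).map f).prod := by
  induction l with
  | nil => simp
  | cons a l ih =>
    have ih := ih fun x hx hpx y hy hpy =>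
      h x (mem_cons_of_mem a hx) hpx y (mem_cons_of_mem a hy) hpy
    cases hpa : p a
    · have hcomm : Commute (f a) ((l.filter p).map f).prod := by
        refine Commute.list_prod_right _ _ fun y hy => ?_
        obtain ⟨z, hz, rfl⟩ := mem_map.1 hy
        obtain ⟨hzl, hpz⟩ := mem_filter.1 hz
        exact h a mem_cons_self hpa z (mem_cons_of_mem a hzl) hpz
      simp [hpa, ih, ← mul_assoc, hcomm.eq]
    · simp [hpa, ih, mul_assoc]

end List

theorem conj_mul_eq_conj_of_commute {G : Type*} [Group G] {n q : G} (k : G) (h : Commute n q) :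
    k * n * q * (k * n)⁻¹ = k * q * k⁻¹ := by
  rw [mul_inv_rev, mul_assoc k n q, h.eq]
  group

/-- Let `l` be a list of queries (group elements), each tagged `K` (`true`) or
`∅` (`false`). If every `∅`-tagged element commutes with `q` and with every
`K`-tagged element of `l`, then conjugating `q` by the product of `l` (last element
leftmost) equals conjugating `q` by the product of the `K`-tagged sublist. -/
theorem stmt_7 {G : Type*} [Group G] (q : G) (l : List (G × Bool))
    (hq : ∀ x ∈ l, x.2 = false → Commute x.1 q)
    (hK : ∀ x ∈ l, x.2 = false → ∀ y ∈ l, y.2 = true → Commute x.1 y.1) :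
    (l.map Prod.fst).reverse.prod * q * ((l.map Prod.fst).reverse.prod)⁻¹ =
      ((l.filter (fun x => x.2)).map Prod.fst).reverse.prod * q *
        (((l.filter (fun x => x.2)).map Prod.fst).reverse.prod)⁻¹ := by
  simp only [← List.map_reverse, ← List.filter_reverse]
  have hsplit := List.prod_map_eq_prod_map_filter_mul_prod_map_filter_not Prod.fst (·.2) l.reverse
    fun x hx hpx y hy hpy => hK x (List.mem_reverse.1 hx) hpx y (List.mem_reverse.1 hy) hpy
  have hcomm : Commute ((l.reverse.filter fun x => !x.2).map Prod.fst).prod q := by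
    refine Commute.list_prod_left _ _ fun y hy => ?_
    obtain ⟨x, hx, rfl⟩ := List.mem_map.1 hy
    obtain ⟨hxl, hpx⟩ := List.mem_filter.1 hx
    exact hq x (List.mem_reverse.1 hxl) (by simpa using hpx)
  rw [hsplit, conj_mul_eq_conj_of_commute _ hcomm]
end
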